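/- The circulant graphs C₃₂({3,13,14}) and C₃₂({5,11,14}) are isomorphic as simple graphs, but they are not Adám isomorphic: for every unit x of ℤ/32ℤ, x·({3,13,14} ∪ -{3,13,14}) ≠ {5,11,14} ∪ -{5,11,14} as subsets of ℤ/32ℤ. -/

import Mathlib

open Pointwise

/-- The circulant graph `Cₙ(R)`: vertices are `ZMod n`, and distinct `u v` are
adjacent iff `u - v ∈ R` or `v - u ∈ R`. -/
def circulantGraph (n : ℕ) (R : Set (ZMod n)) : SimpleGraph (ZMod n) where
  Adj u v := u ≠ v ∧ (u - v ∈ R ∨ v - u ∈ R)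
  symm := ⟨fun u v h => ⟨h.1.symm, h.2.symm⟩⟩
  loopless := ⟨fun u h => h.1 rfl⟩

/-!
The permutation `twist u = u + 8u²` of `ℤ/32` fixes the even residues and adds `8` to the odd
ones. It satisfies `twist u - twist v = twist (u - v) · (1 + 16v)` with `1 + 16v ∈ {1, 17}`; since
`twist` maps the symmetric connection set `{±3, ±13, ±14}` onto `{±5, ±11, ±14}` and the latter is
stable under multiplication by `17`, `twist` is a graph isomorphism.

No multiplier works: `14x ∈ {±5, ±11, ±14}` forces `14x = ±14`, i.e. `x ≡ ±1 (mod 16)`, and then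
`3x ≡ ±3 (mod 16)`, whereas every element of `{±5, ±11, ±14}` is `±5` or `±2` modulo `16`.
-/

theorem circulantGraph_adj_iff {n : ℕ} {R : Set (ZMod n)} {u v : ZMod n} :
    (circulantGraph n R).Adj u v ↔ u ≠ v ∧ u - v ∈ R ∪ -R := by
  simp only [circulantGraph, Set.mem_union, Set.mem_neg, neg_sub]

def circulantGraph.isoOfSubMemIff {n : ℕ} {R S : Set (ZMod n)} (e : ZMod n ≃ ZMod n)
    (he : ∀ u v, e u - e v ∈ S ∪ -S ↔ u - v ∈ R ∪ -R) :
    circulantGraph n R ≃g circulantGraph n S where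
  toEquiv := e
  map_rel_iff' := by
    simp only [circulantGraph_adj_iff, he, e.injective.ne_iff, implies_true]

namespace ZMod32

theorem union_neg_3_13_14 :
    ({3, 13, 14} : Set (ZMod 32)) ∪ -{3, 13, 14} = {3, 13, 14, 18, 19, 29} := by
  ext a
  simp only [Set.mem_union, Set.mem_neg, Set.mem_insert_iff, Set.mem_singleton_iff]
  revert a
  decide

theorem union_neg_5_11_14 :
    ({5, 11, 14} : Set (ZMod 32)) ∪ -{5, 11, 14} = {5, 11, 14, 18, 21, 27} := by
  ext a
  simp only [Set.mem_union, Set.mem_neg, Set.mem_insert_iff, Set.mem_singleton_iff]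
  revert a
  decide

theorem thirtyTwo_eq_zero : (32 : ZMod 32) = 0 := rfl

def twist (u : ZMod 32) : ZMod 32 := u + 8 * u ^ 2

theorem twist_sub_twist (u v : ZMod 32) : twist u - twist v = twist (u - v) * (1 + 16 * v) := by
  unfold twist
  linear_combination (-4 * v * (u - v) ^ 2) * thirtyTwo_eq_zero

def twistEquiv : ZMod 32 ≃ ZMod 32 where
  toFun := twist
  invFun u := u - 8 * u ^ 2
  left_inv u := by
    unfold twist
    linear_combination (-4 * u ^ 3 - 16 * u ^ 4) * thirtyTwo_eq_zero
  right_inv u := by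
    unfold twist
    linear_combination (16 * u ^ 4 - 4 * u ^ 3) * thirtyTwo_eq_zero

theorem one_add_sixteen_mul (v : ZMod 32) : 1 + 16 * v = 1 ∨ 1 + 16 * v = 17 := by
  revert v
  decide

theorem mul_seventeen_mem_iff (t : ZMod 32) :
    t * 17 ∈ ({5, 11, 14, 18, 21, 27} : Set (ZMod 32)) ↔
      t ∈ ({5, 11, 14, 18, 21, 27} : Set (ZMod 32)) := by
  revert t
  decide

theorem twist_mem_iff (d : ZMod 32) :
    twist d ∈ ({5, 11, 14, 18, 21, 27} : Set (ZMod 32)) ↔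
      d ∈ ({3, 13, 14, 18, 19, 29} : Set (ZMod 32)) := by
  revert d
  decide

theorem twist_sub_twist_mem_iff (u v : ZMod 32) :
    twist u - twist v ∈ ({5, 11, 14, 18, 21, 27} : Set (ZMod 32)) ↔
      u - v ∈ ({3, 13, 14, 18, 19, 29} : Set (ZMod 32)) := by
  rw [twist_sub_twist, ← twist_mem_iff]
  rcases one_add_sixteen_mul v with h | h <;> rw [h]
  · rw [mul_one]
  · exact mul_seventeen_mem_iff _

def circulantGraphIso :
    circulantGraph 32 {3, 13, 14} ≃g circulantGraph 32 {5, 11, 14} :=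
  circulantGraph.isoOfSubMemIff twistEquiv fun u v => by
    rw [union_neg_3_13_14, union_neg_5_11_14]
    exact twist_sub_twist_mem_iff u v

def mod16 : ZMod 32 →+* ZMod 16 := ZMod.castHom (by norm_num) _

theorem mod16_eq_one_or_neg_one_of_mul_fourteen_mem (x : ZMod 32)
    (hx : x * 14 ∈ ({5, 11, 14, 18, 21, 27} : Set (ZMod 32))) :
    mod16 x = 1 ∨ mod16 x = -1 := by
  revert x
  decide

theorem mod16_ne_three_of_mem (t : ZMod 32) (ht : t ∈ ({5, 11, 14, 18, 21, 27} : Set (ZMod 32))) :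
    mod16 t ≠ 3 ∧ mod16 t ≠ -3 := by
  revert t
  decide

theorem mul_image_ne (x : ZMod 32) :
    (x * ·) '' ({3, 13, 14, 18, 19, 29} : Set (ZMod 32)) ≠ {5, 11, 14, 18, 21, 27} := by
  intro hx
  have h14 : x * 14 ∈ ({5, 11, 14, 18, 21, 27} : Set (ZMod 32)) :=
    hx ▸ Set.mem_image_of_mem _ (by simp)
  have h3 : x * 3 ∈ ({5, 11, 14, 18, 21, 27} : Set (ZMod 32)) :=
    hx ▸ Set.mem_image_of_mem _ (by simp)
  have hne := mod16_ne_three_of_mem _ h3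
  rw [map_mul, map_ofNat] at hne
  rcases mod16_eq_one_or_neg_one_of_mul_fourteen_mem x h14 with h | h <;>
    simp [h] at hne

end ZMod32

theorem stmt7 :
    Nonempty (circulantGraph 32 ({3,13,14} : Set (ZMod 32)) ≃g circulantGraph 32 ({5,11,14} : Set (ZMod 32))) ∧
    ∀ x : (ZMod 32)ˣ,
      (fun r => (x : ZMod 32) * r) '' (({3,13,14} : Set (ZMod 32)) ∪ -({3,13,14} : Set (ZMod 32))) ≠ ({5,11,14} : Set (ZMod 32)) ∪ -({5,11,14} : Set (ZMod 32)) := by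
  rw [ZMod32.union_neg_3_13_14, ZMod32.union_neg_5_11_14]
  exact ⟨⟨ZMod32.circulantGraphIso⟩, fun x => ZMod32.mul_image_ne x⟩
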